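/- Let x₁ = ln(1 + √2) and define φ: ℝ → ℝ piecewise by φ(x) = 4·arctan(e^{x + x₁}) for x ≤ 0 and φ(x) = 3π − 4·arctan(e^{−x + x₁}) for x ≥ 0. Then φ is continuously differentiable on ℝ (with φ(0) = 3π/2), satisfies φ'' = sin(φ) on (−∞,0) and φ'' = sin(φ − π) on (0,∞), φ(x) → 0 as x → −∞, and φ(x) → 3π as x → +∞. -/

import Mathlib

open Real Filter Topology

/-! The sine-Gordon kink `k(x) = 4 arctan eˣ` satisfies `k' = 2 / cosh` and `k'' = sin k`.
For `x ≤ 0`, `φ` is the kink shifted by `x₁`; for `x ≥ 0` it is `3π - k(x₁ - x)`, whose second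
derivative is `-sin k(x₁ - x) = sin (φ - π)`. Because `arctan (1 + √2) = 3π/8`, both pieces take
the value `k(x₁) = 3π/2` at the origin, and their slopes there are both `k'(x₁)`, so they glue to
a `C¹` function. -/

noncomputable def kink (x : ℝ) : ℝ := 4 * arctan (exp x)

lemma hasDerivAt_kink (x : ℝ) : HasDerivAt kink (2 / cosh x) x := by
  refine (((hasDerivAt_exp x).arctan).const_mul 4).congr_deriv ?_
  rw [cosh_eq, exp_neg]
  field_simp
  ring

lemma differentiable_kink : Differentiable ℝ kink :=
  fun x => (hasDerivAt_kink x).differentiableAt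

lemma deriv_kink : deriv kink = fun x => 2 / cosh x :=
  funext fun x => (hasDerivAt_kink x).deriv

@[fun_prop]
lemma continuous_deriv_kink : Continuous (deriv kink) := by
  rw [deriv_kink]
  exact continuous_const.div continuous_cosh fun x => (cosh_pos x).ne'

lemma sin_kink (x : ℝ) : sin (kink x) = -2 * sinh x / cosh x ^ 2 := by
  have hs : √(1 + exp x ^ 2) ^ 2 = 1 + exp x ^ 2 := sq_sqrt (by positivity)
  rw [kink, show 4 * arctan (exp x) = 2 * (2 * arctan (exp x)) by ring, sin_two_mul, sin_two_mul,
    cos_two_mul, sin_arctan, cos_arctan, sinh_eq, cosh_eq, exp_neg]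
  field_simp
  rw [show √(1 + exp x ^ 2) ^ 4 = (√(1 + exp x ^ 2) ^ 2) ^ 2 by ring, hs]
  ring

lemma hasDerivAt_deriv_kink (x : ℝ) : HasDerivAt (deriv kink) (sin (kink x)) x := by
  rw [deriv_kink, sin_kink]
  refine (((hasDerivAt_cosh x).inv (cosh_pos x).ne').const_mul 2).congr_deriv (by ring)

lemma tendsto_kink_atBot : Tendsto kink atBot (𝓝 0) := by
  unfold kink
  simpa using ((continuous_arctan.tendsto 0).comp tendsto_exp_atBot).const_mul 4

lemma kink_log_one_add_sqrt_two : kink (log (1 + √2)) = 3 * π / 2 := by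
  have hs : √2 ^ 2 = 2 := sq_sqrt (by norm_num)
  have hpos : 0 < √2 := by positivity
  have h := two_mul_arctan_add_pi (show 1 < 1 + √2 by linarith)
  have hden : 1 - (1 + √2) ^ 2 ≠ 0 := by nlinarith
  rw [show 2 * (1 + √2) / (1 - (1 + √2) ^ 2) = -1 by field_simp; nlinarith, arctan_neg,
    arctan_one] at h
  rw [kink, exp_log (by positivity)]
  linarith

section Gluing

variable {f g f' g' : ℝ → ℝ} {c x : ℝ} {l : Filter ℝ}

lemma ite_le_eventuallyEq_left (hx : x < c) :
    (fun y => if y ≤ c then f y else g y) =ᶠ[𝓝 x] f := by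
  filter_upwards [eventually_lt_nhds hx] with y hy
  exact if_pos hy.le

lemma ite_le_eventuallyEq_right (hx : c < x) :
    (fun y => if y ≤ c then f y else g y) =ᶠ[𝓝 x] g := by
  filter_upwards [eventually_gt_nhds hx] with y hy
  exact if_neg hy.not_ge

lemma deriv_ite_le_of_lt (hx : x < c) :
    deriv (fun y => if y ≤ c then f y else g y) x = deriv f x :=
  (ite_le_eventuallyEq_left hx).deriv_eq

lemma deriv_ite_le_of_gt (hx : c < x) :
    deriv (fun y => if y ≤ c then f y else g y) x = deriv g x :=
  (ite_le_eventuallyEq_right hx).deriv_eq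

lemma hasDerivAt_ite_le (hf : ∀ x, HasDerivAt f (f' x) x) (hg : ∀ x, HasDerivAt g (g' x) x)
    (hfg : f c = g c) (hfg' : f' c = g' c) (x : ℝ) :
    HasDerivAt (fun y => if y ≤ c then f y else g y) (if x ≤ c then f' x else g' x) x := by
  rcases lt_trichotomy x c with hx | rfl | hx
  · rw [if_pos hx.le]
    exact (hf x).congr_of_eventuallyEq (ite_le_eventuallyEq_left hx)
  · have hleft : HasDerivWithinAt (fun y => if y ≤ x then f y else g y) (f' x) (Set.Iic x) x :=
      (hf x).hasDerivWithinAt.congr (fun y hy => if_pos hy) (if_pos le_rfl)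
    have hright : HasDerivWithinAt (fun y => if y ≤ x then f y else g y) (f' x) (Set.Ici x) x := by
      rw [hfg']
      refine (hg x).hasDerivWithinAt.congr (fun y hy => ?_) (by rw [if_pos le_rfl, hfg])
      split_ifs with hyx
      · rw [le_antisymm hyx hy, hfg]
      · rfl
    rw [if_pos le_rfl, ← hasDerivWithinAt_univ, ← Set.Iic_union_Ici]
    exact hleft.union hright
  · rw [if_neg hx.not_ge]
    exact (hg x).congr_of_eventuallyEq (ite_le_eventuallyEq_right hx)

lemma contDiff_one_ite_le (hf : ∀ x, HasDerivAt f (f' x) x) (hg : ∀ x, HasDerivAt g (g' x) x)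
    (hfg : f c = g c) (hfg' : f' c = g' c) (hf' : Continuous f') (hg' : Continuous g') :
    ContDiff ℝ 1 (fun y => if y ≤ c then f y else g y) := by
  have hd := hasDerivAt_ite_le hf hg hfg hfg'
  rw [contDiff_one_iff_deriv, funext fun x => (hd x).deriv]
  exact ⟨fun x => (hd x).differentiableAt,
    hf'.if_le hg' continuous_id continuous_const fun x hx => hx ▸ hfg'⟩

lemma Filter.Tendsto.ite_le_atBot (hf : Tendsto f atBot l) :
    Tendsto (fun y => if y ≤ c then f y else g y) atBot l :=
  hf.congr' <| (eventually_le_atBot c).mono fun _ hy => (if_pos hy).symm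

lemma Filter.Tendsto.ite_le_atTop (hg : Tendsto g atTop l) :
    Tendsto (fun y => if y ≤ c then f y else g y) atTop l :=
  hg.congr' <| (eventually_gt_atTop c).mono fun _ hy => (if_neg hy.not_ge).symm

end Gluing

/-- The explicit static 3π-kink of the unforced 0-π sine-Gordon equation:
with `x₁ = ln(1+√2)`, the function `φ(x) = 4 arctan(e^{x+x₁})` for `x ≤ 0`,
`φ(x) = 3π - 4 arctan(e^{-x+x₁})` for `x > 0`, is C¹, satisfies `φ(0) = 3π/2`,
`φ'' = sin φ` on `(-∞,0)`, `φ'' = sin(φ - π)` on `(0,∞)`, with limits `0` at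
`-∞` and `3π` at `+∞`. -/
theorem static_3pi_kink
    (x₁ : ℝ) (hx₁ : x₁ = Real.log (1 + Real.sqrt 2))
    (φ : ℝ → ℝ)
    (hφ : ∀ x : ℝ, φ x =
      if x ≤ 0 then 4 * arctan (exp (x + x₁))
      else 3 * π - 4 * arctan (exp (-x + x₁))) :
    ContDiff ℝ 1 φ ∧
    φ 0 = 3 * π / 2 ∧
    (∀ x < (0 : ℝ), deriv (deriv φ) x = sin (φ x)) ∧
    (∀ x > (0 : ℝ), deriv (deriv φ) x = sin (φ x - π)) ∧
    Tendsto φ atBot (𝓝 0) ∧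
    Tendsto φ atTop (𝓝 (3 * π)) := by
  obtain rfl : φ = fun x => if x ≤ 0 then kink (x + x₁) else 3 * π - kink (x₁ - x) := by
    funext x; rw [hφ, neg_add_eq_sub]; rfl
  have hkink : kink x₁ = 3 * π / 2 := hx₁ ▸ kink_log_one_add_sqrt_two
  have hf x := (differentiable_kink (x + x₁)).hasDerivAt.comp_add_const x x₁
  have hg x : HasDerivAt (fun y => 3 * π - kink (x₁ - y)) (deriv kink (x₁ - x)) x := by
    simpa using ((differentiable_kink _).hasDerivAt.comp_const_sub x₁ x).const_sub (3 * π)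
  have hfg : kink (0 + x₁) = 3 * π - kink (x₁ - 0) := by
    rw [zero_add, sub_zero, hkink]; ring
  have hfg' : deriv kink (0 + x₁) = deriv kink (x₁ - 0) := by rw [zero_add, sub_zero]
  have hderiv := funext fun x => (hasDerivAt_ite_le hf hg hfg hfg' x).deriv
  refine ⟨contDiff_one_ite_le hf hg hfg hfg' (by fun_prop) (by fun_prop), ?_, fun x hx => ?_,
    fun x hx => ?_, ?_, ?_⟩
  · beta_reduce; rw [if_pos le_rfl, zero_add, hkink]
  · beta_reduce; rw [hderiv, deriv_ite_le_of_lt hx, if_pos hx.le,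
      ((hasDerivAt_deriv_kink _).comp_add_const x x₁).deriv]
  · beta_reduce; rw [hderiv, deriv_ite_le_of_gt hx, if_neg hx.not_ge,
      ((hasDerivAt_deriv_kink _).comp_const_sub x₁ x).deriv,
      show 3 * π - kink (x₁ - x) - π = -kink (x₁ - x) + 2 * π by ring, sin_add_two_pi, sin_neg]
  · exact (tendsto_kink_atBot.comp (tendsto_atBot_add_const_right _ x₁ tendsto_id)).ite_le_atBot
  · refine Tendsto.ite_le_atTop ?_
    simpa [← sub_eq_add_neg] using tendsto_const_nhds.sub
      (tendsto_kink_atBot.comp (tendsto_atBot_add_const_left _ x₁ tendsto_neg_atTop_atBot))
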